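/- Regret bound (off-policy form): Under the same setup (π₂ optimal under r for entropy-regularized RL, α = max_s D_TV(π₁(·|s), π₂(·|s)), ε = max_{s,a}|A_{π₂}(s,a)|, ΔA as before), |U_r(π₁) − U_r(π₂) − Σ_{t≥0} γ^t E_{s_t∼π₂}[ΔA(s_t)]| ≤ 2αγ(2α+1)ε/(1−γ)². -/

import Mathlib

/-!
For any `V` with `Q = r + γ P V`, telescoping `γ^t E_{d_t}[V] - γ^(t+1) E_{d_(t+1)}[V]` gives
the performance identity `U_r(π) = E_{d_0}[V] + Σ_t γ^t E_{s ∼ d_t}[E_{a ∼ π}(Q - V)]`.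
Subtracting it for `π₂` from the one for `π₁` and removing the off-policy term leaves
`Σ_t γ^t (E_{s ∼ d₁ t} - E_{s ∼ d₂ t})[E_{a ∼ π₁}(Q - V)]`. The inner function is bounded by
`ε`, and one step of the dynamics moves the two state distributions apart by at most `2α` in
`ℓ¹`, so the `t`-th term is at most `2αtεγ^t`. Summing gives `2αγε/(1-γ)²`, already below the
claimed bound; the sharper drift bound `2(1 - (1-α)^t)` is not needed, since
`1 - (1-α)^t ≤ αt` is all it contributes.
-/

open Finset

lemma abs_sum_mul_le_sum_abs_mul {ι : Type*} [Fintype ι] (w x : ι → ℝ) {C : ℝ}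
    (hx : ∀ i, |x i| ≤ C) : |∑ i, w i * x i| ≤ (∑ i, |w i|) * C :=
  calc |∑ i, w i * x i| ≤ ∑ i, |w i| * |x i| := by
        simpa only [abs_mul] using abs_sum_le_sum_abs (fun i => w i * x i) univ
    _ ≤ ∑ i, |w i| * C := by gcongr with i; exact hx i
    _ = (∑ i, |w i|) * C := (sum_mul ..).symm

lemma abs_sum_mul_le_of_mem_stdSimplex {ι : Type*} [Fintype ι] {p x : ι → ℝ} {C : ℝ}
    (hp : p ∈ stdSimplex ℝ ι) (hx : ∀ i, |x i| ≤ C) : |∑ i, p i * x i| ≤ C := by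
  simpa [abs_of_nonneg (hp.1 _), hp.2] using abs_sum_mul_le_sum_abs_mul p x hx

lemma sum_abs_sum_mul_le {ι κ : Type*} [Fintype ι] [Fintype κ] {P : ι → κ → ℝ}
    (hP : ∀ i, P i ∈ stdSimplex ℝ κ) (x : ι → ℝ) :
    ∑ j, |∑ i, x i * P i j| ≤ ∑ i, |x i| :=
  calc ∑ j, |∑ i, x i * P i j| ≤ ∑ j, ∑ i, |x i| * P i j := by
        gcongr with j
        simpa only [abs_mul, abs_of_nonneg ((hP _).1 _)] using
          abs_sum_le_sum_abs (fun i => x i * P i j) univ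
    _ = ∑ i, |x i| := by rw [sum_comm]; simp [← mul_sum, (hP _).2]

section Discounting

variable {γ : ℝ}

lemma summable_pow_mul_of_abs_le (hγ0 : 0 ≤ γ) (hγ1 : γ < 1) {f : ℕ → ℝ} {C : ℝ}
    (hf : ∀ t, |f t| ≤ C) : Summable fun t => γ ^ t * f t :=
  ((summable_geometric_of_lt_one hγ0 hγ1).mul_right C).of_norm_bounded fun t => by
    rw [Real.norm_eq_abs, abs_mul, abs_pow, abs_of_nonneg hγ0]
    exact mul_le_mul_of_nonneg_left (hf t) (pow_nonneg hγ0 t)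

lemma abs_tsum_pow_mul_le_of_abs_le_mul (hγ0 : 0 ≤ γ) (hγ1 : γ < 1) {f : ℕ → ℝ} {c : ℝ}
    (hf : ∀ t, |f t| ≤ c * t) : |∑' t, γ ^ t * f t| ≤ c * (γ / (1 - γ) ^ 2) := by
  have hγ : ‖γ‖ < 1 := by rwa [Real.norm_of_nonneg hγ0]
  refine tsum_of_norm_bounded (f := fun t => γ ^ t * f t)
    ((hasSum_coe_mul_geometric_of_norm_lt_one hγ).mul_left c) fun t => ?_
  rw [Real.norm_eq_abs, abs_mul, abs_pow, abs_of_nonneg hγ0]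
  calc γ ^ t * |f t| ≤ γ ^ t * (c * t) := mul_le_mul_of_nonneg_left (hf t) (pow_nonneg hγ0 t)
    _ = c * (t * γ ^ t) := by ring

end Discounting

section MarkovDecisionProcess

variable {S A : Type*} [Fintype S] [Fintype A]

def stepDist (P : S → A → S → ℝ) (π : S → A → ℝ) (μ : S → ℝ) (s' : S) : ℝ :=
  ∑ s, ∑ a, μ s * π s a * P s a s'

lemma sum_stepDist_mul (P : S → A → S → ℝ) (π : S → A → ℝ) (μ f : S → ℝ) :
    ∑ s', stepDist P π μ s' * f s' = ∑ s, ∑ a, μ s * π s a * ∑ s', P s a s' * f s' := by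
  simp only [stepDist, sum_mul, mul_sum, mul_assoc]
  rw [sum_comm]
  exact sum_congr rfl fun s _ => sum_comm

variable {P : S → A → S → ℝ}

lemma stepDist_mem_stdSimplex {π : S → A → ℝ} {μ : S → ℝ} (hP : ∀ s a, P s a ∈ stdSimplex ℝ S)
    (hπ : ∀ s, π s ∈ stdSimplex ℝ A) (hμ : μ ∈ stdSimplex ℝ S) :
    stepDist P π μ ∈ stdSimplex ℝ S := by
  refine ⟨fun s' => sum_nonneg fun s _ => sum_nonneg fun a _ =>
    mul_nonneg (mul_nonneg (hμ.1 s) ((hπ s).1 a)) ((hP s a).1 s'), ?_⟩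
  simpa [(hP _ _).2, ← mul_sum, (hπ _).2, hμ.2] using sum_stepDist_mul P π μ 1

lemma stateDist_mem_stdSimplex {π : S → A → ℝ} {d : ℕ → S → ℝ}
    (hP : ∀ s a, P s a ∈ stdSimplex ℝ S) (hπ : ∀ s, π s ∈ stdSimplex ℝ A)
    (h0 : d 0 ∈ stdSimplex ℝ S) (hsucc : ∀ t, d (t + 1) = stepDist P π (d t)) :
    ∀ t, d t ∈ stdSimplex ℝ S
  | 0 => h0
  | t + 1 => hsucc t ▸ stepDist_mem_stdSimplex hP hπ (stateDist_mem_stdSimplex hP hπ h0 hsucc t)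

lemma sum_abs_stepDist_sub_le {π₁ π₂ : S → A → ℝ} {μ ν : S → ℝ} {β : ℝ}
    (hP : ∀ s a, P s a ∈ stdSimplex ℝ S) (hπ₁ : ∀ s, π₁ s ∈ stdSimplex ℝ A)
    (hν : ν ∈ stdSimplex ℝ S) (hβ : ∀ s, ∑ a, |π₁ s a - π₂ s a| ≤ β) :
    ∑ s', |stepDist P π₁ μ s' - stepDist P π₂ ν s'| ≤ ∑ s, |μ s - ν s| + β := by
  have hdiff : ∀ s', stepDist P π₁ μ s' - stepDist P π₂ ν s' =
      ∑ p : S × A, (μ p.1 * π₁ p.1 p.2 - ν p.1 * π₂ p.1 p.2) * P p.1 p.2 s' := fun s' => by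
    simp only [stepDist, ← sum_sub_distrib, sub_mul]
    exact (Fintype.sum_prod_type' fun s a => μ s * π₁ s a * P s a s' - ν s * π₂ s a * P s a s').symm
  have hstate : ∀ s, ∑ a, |μ s * π₁ s a - ν s * π₂ s a| ≤ |μ s - ν s| + ν s * β := fun s =>
    calc ∑ a, |μ s * π₁ s a - ν s * π₂ s a|
        ≤ ∑ a, (|μ s - ν s| * π₁ s a + ν s * |π₁ s a - π₂ s a|) := by
          gcongr with a
          calc |μ s * π₁ s a - ν s * π₂ s a|
              = |(μ s - ν s) * π₁ s a + ν s * (π₁ s a - π₂ s a)| := by congr 1; ring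
            _ ≤ |μ s - ν s| * π₁ s a + ν s * |π₁ s a - π₂ s a| := by
              simpa only [abs_mul, abs_of_nonneg ((hπ₁ s).1 a), abs_of_nonneg (hν.1 s)]
                using abs_add_le ((μ s - ν s) * π₁ s a) (ν s * (π₁ s a - π₂ s a))
      _ = |μ s - ν s| + ν s * ∑ a, |π₁ s a - π₂ s a| := by
          rw [sum_add_distrib, ← mul_sum, ← mul_sum, (hπ₁ s).2, mul_one]
      _ ≤ |μ s - ν s| + ν s * β := by gcongr; exacts [hν.1 s, hβ s]
  calc ∑ s', |stepDist P π₁ μ s' - stepDist P π₂ ν s'|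
      = ∑ s', |∑ p : S × A, (μ p.1 * π₁ p.1 p.2 - ν p.1 * π₂ p.1 p.2) * P p.1 p.2 s'| := by
        simp only [hdiff]
    _ ≤ ∑ p : S × A, |μ p.1 * π₁ p.1 p.2 - ν p.1 * π₂ p.1 p.2| :=
        sum_abs_sum_mul_le (fun p : S × A => hP p.1 p.2) _
    _ = ∑ s, ∑ a, |μ s * π₁ s a - ν s * π₂ s a| :=
        Fintype.sum_prod_type' fun s a => |μ s * π₁ s a - ν s * π₂ s a|
    _ ≤ ∑ s, (|μ s - ν s| + ν s * β) := sum_le_sum fun s _ => hstate s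
    _ = ∑ s, |μ s - ν s| + β := by rw [sum_add_distrib, ← sum_mul, hν.2, one_mul]

lemma sum_abs_stateDist_sub_le {π₁ π₂ : S → A → ℝ} {d₁ d₂ : ℕ → S → ℝ} {β : ℝ}
    (hP : ∀ s a, P s a ∈ stdSimplex ℝ S) (hπ₁ : ∀ s, π₁ s ∈ stdSimplex ℝ A)
    (hd₂ : ∀ t, d₂ t ∈ stdSimplex ℝ S) (hβ : ∀ s, ∑ a, |π₁ s a - π₂ s a| ≤ β)
    (h0 : d₁ 0 = d₂ 0) (hsucc₁ : ∀ t, d₁ (t + 1) = stepDist P π₁ (d₁ t))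
    (hsucc₂ : ∀ t, d₂ (t + 1) = stepDist P π₂ (d₂ t)) :
    ∀ t : ℕ, ∑ s, |d₁ t s - d₂ t s| ≤ t * β
  | 0 => by simp [h0]
  | t + 1 => by
    rw [hsucc₁, hsucc₂, Nat.cast_succ, add_one_mul]
    grw [sum_abs_stepDist_sub_le hP hπ₁ (hd₂ t) hβ,
      sum_abs_stateDist_sub_le hP hπ₁ hd₂ hβ h0 hsucc₁ hsucc₂ t]

lemma summable_pow_mul_sum_mul {γ : ℝ} (hγ0 : 0 ≤ γ) (hγ1 : γ < 1) {d : ℕ → S → ℝ}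
    (hd : ∀ t, d t ∈ stdSimplex ℝ S) (x : S → ℝ) :
    Summable fun t => γ ^ t * ∑ s, d t s * x s :=
  summable_pow_mul_of_abs_le hγ0 hγ1 fun t =>
    abs_sum_mul_le_of_mem_stdSimplex (hd t) fun s => norm_le_pi_norm x s

theorem tsum_pow_mul_reward_eq {γ : ℝ} (hγ0 : 0 ≤ γ) (hγ1 : γ < 1) {π : S → A → ℝ}
    {d : ℕ → S → ℝ} (r Q : S → A → ℝ) (V : S → ℝ) (hπ : ∀ s, π s ∈ stdSimplex ℝ A)
    (hd : ∀ t, d t ∈ stdSimplex ℝ S) (hsucc : ∀ t, d (t + 1) = stepDist P π (d t))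
    (hQ : ∀ s a, Q s a = r s a + γ * ∑ s', P s a s' * V s') :
    ∑' t, γ ^ t * ∑ s, ∑ a, d t s * π s a * r s a
      = ∑ s, d 0 s * V s + ∑' t, γ ^ t * ∑ s, d t s * ∑ a, π s a * (Q s a - V s) := by
  set F : ℕ → ℝ := fun t => ∑ s, d t s * V s
  set G : ℕ → ℝ := fun t => ∑ s, d t s * ∑ a, π s a * Q s a
  have hreward : ∀ t, ∑ s, ∑ a, d t s * π s a * r s a = G t - γ * F (t + 1) := fun t => by
    have hr : ∀ s a, d t s * π s a * r s a
        = d t s * (π s a * Q s a) - γ * (d t s * π s a * ∑ s', P s a s' * V s') := by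
      intro s a; rw [hQ]; ring
    simp only [hr, sum_sub_distrib, ← mul_sum, G, F, hsucc t, sum_stepDist_mul]
  have hadvantage : ∀ t, ∑ s, d t s * ∑ a, π s a * (Q s a - V s) = G t - F t := fun t => by
    simp only [G, F, mul_sub, sum_sub_distrib, ← sum_mul, (hπ _).2, one_mul]
  have hG := (summable_pow_mul_sum_mul hγ0 hγ1 hd fun s => ∑ a, π s a * Q s a).hasSum
  have hF := (summable_pow_mul_sum_mul hγ0 hγ1 hd V).hasSum
  have hF' := (hasSum_nat_add_iff' 1).mpr hF
  calc ∑' t, γ ^ t * ∑ s, ∑ a, d t s * π s a * r s a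
      = ∑' t, (γ ^ t * G t - γ ^ (t + 1) * F (t + 1)) :=
        tsum_congr fun t => by rw [hreward, pow_succ]; ring
    _ = F 0 + ∑' t, (γ ^ t * G t - γ ^ t * F t) := by
        rw [(hG.sub hF').tsum_eq, (hG.sub hF).tsum_eq]
        simp only [range_one, sum_singleton, pow_zero, one_mul]
        ring
    _ = _ := by congr 1; exact tsum_congr fun t => by rw [hadvantage, mul_sub]

theorem abs_regret_sub_tsum_advantage_le {γ : ℝ} (hγ0 : 0 ≤ γ) (hγ1 : γ < 1)
    {π₁ π₂ : S → A → ℝ} {d₁ d₂ : ℕ → S → ℝ} (r Q : S → A → ℝ) (V : S → ℝ) {β ε : ℝ}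
    (hP : ∀ s a, P s a ∈ stdSimplex ℝ S) (hπ₁ : ∀ s, π₁ s ∈ stdSimplex ℝ A)
    (hπ₂ : ∀ s, π₂ s ∈ stdSimplex ℝ A) (hd₁0 : d₁ 0 ∈ stdSimplex ℝ S) (h0 : d₁ 0 = d₂ 0)
    (hsucc₁ : ∀ t, d₁ (t + 1) = stepDist P π₁ (d₁ t))
    (hsucc₂ : ∀ t, d₂ (t + 1) = stepDist P π₂ (d₂ t))
    (hQ : ∀ s a, Q s a = r s a + γ * ∑ s', P s a s' * V s')
    (hβ : ∀ s, ∑ a, |π₁ s a - π₂ s a| ≤ β) (hε : ∀ s a, |Q s a - V s| ≤ ε) (hε0 : 0 ≤ ε) :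
    |((∑' t, γ ^ t * ∑ s, ∑ a, d₁ t s * π₁ s a * r s a)
        - (∑' t, γ ^ t * ∑ s, ∑ a, d₂ t s * π₂ s a * r s a))
      - ∑' t, γ ^ t * ∑ s, d₂ t s * ∑ a, (π₁ s a - π₂ s a) * (Q s a - V s)|
      ≤ β * ε * (γ / (1 - γ) ^ 2) := by
  have hd₁ := stateDist_mem_stdSimplex hP hπ₁ hd₁0 hsucc₁
  have hd₂ := stateDist_mem_stdSimplex hP hπ₂ (h0 ▸ hd₁0) hsucc₂
  set adv₁ : S → ℝ := fun s => ∑ a, π₁ s a * (Q s a - V s)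
  set adv₂ : S → ℝ := fun s => ∑ a, π₂ s a * (Q s a - V s)
  have hΔ : ∀ s, ∑ a, (π₁ s a - π₂ s a) * (Q s a - V s) = adv₁ s - adv₂ s := fun s => by
    simp only [adv₁, adv₂, sub_mul, sum_sub_distrib]
  have hsplit : ∀ t, γ ^ t * ∑ s, d₁ t s * adv₁ s - γ ^ t * ∑ s, d₂ t s * adv₂ s
      - γ ^ t * ∑ s, d₂ t s * (adv₁ s - adv₂ s) = γ ^ t * ∑ s, (d₁ t s - d₂ t s) * adv₁ s :=
    fun t => by simp only [mul_sub, sub_mul, sum_sub_distrib]; ring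
  have hs₁ := summable_pow_mul_sum_mul hγ0 hγ1 hd₁ adv₁
  have hs₂ := summable_pow_mul_sum_mul hγ0 hγ1 hd₂ adv₂
  have hsΔ := summable_pow_mul_sum_mul hγ0 hγ1 hd₂ fun s => adv₁ s - adv₂ s
  simp only [hΔ]
  rw [tsum_pow_mul_reward_eq hγ0 hγ1 r Q V hπ₁ hd₁ hsucc₁ hQ,
    tsum_pow_mul_reward_eq hγ0 hγ1 r Q V hπ₂ hd₂ hsucc₂ hQ, h0, add_sub_add_left_eq_sub,
    ← hs₁.tsum_sub hs₂, ← (hs₁.sub hs₂).tsum_sub hsΔ, tsum_congr hsplit]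
  refine abs_tsum_pow_mul_le_of_abs_le_mul hγ0 hγ1 fun t => ?_
  calc |∑ s, (d₁ t s - d₂ t s) * adv₁ s| ≤ (∑ s, |d₁ t s - d₂ t s|) * ε :=
        abs_sum_mul_le_sum_abs_mul _ _ fun s => abs_sum_mul_le_of_mem_stdSimplex (hπ₁ s) (hε s)
    _ ≤ t * β * ε := by
        gcongr; exact sum_abs_stateDist_sub_le hP hπ₁ hd₂ hβ h0 hsucc₁ hsucc₂ t
    _ = β * ε * t := by ring

end MarkovDecisionProcess

theorem regret_bound_off_policy_general {S A : Type*} [Fintype S] [Nonempty S] [Fintype A] [Nonempty A]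
    (γ : ℝ) (hγ0 : 0 ≤ γ) (hγ1 : γ < 1)
    (r : S → A → ℝ) (d0 : S → ℝ) (Ptr : S → A → S → ℝ)
    (hd0 : (∀ s, 0 ≤ d0 s) ∧ ∑ s, d0 s = 1)
    (hPtr : ∀ s a, (∀ s', 0 ≤ Ptr s a s') ∧ ∑ s', Ptr s a s' = 1)
    (π₁ π₂ : S → A → ℝ)
    (hπ₁ : ∀ s, (∀ a, 0 ≤ π₁ s a) ∧ ∑ a, π₁ s a = 1)
    (hπ₂ : ∀ s, (∀ a, 0 ≤ π₂ s a) ∧ ∑ a, π₂ s a = 1)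
    (d : (S → A → ℝ) → ℕ → S → ℝ)
    (hdzero : ∀ π, d π 0 = d0)
    (hdsucc : ∀ π t s', d π (t + 1) s' = ∑ s, ∑ a, d π t s * π s a * Ptr s a s')
    -- soft value functions of π₂
    (Q : S → A → ℝ) (V : S → ℝ)
    (hQ : ∀ s a, Q s a = r s a + γ * ∑ s', Ptr s a s' * V s')
    -- α : maximal total-variation distance between π₁ and π₂; ε : maximal |A_{π₂}|
    (α ε : ℝ)
    (hα : α = univ.sup' univ_nonempty (fun s => (∑ a, |π₁ s a - π₂ s a|) / 2))
    (hε : ε = univ.sup' univ_nonempty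
        (fun s => univ.sup' univ_nonempty (fun a => |Q s a - V s|))) :
    |((∑' t : ℕ, γ ^ t * ∑ s, ∑ a, d π₁ t s * π₁ s a * r s a)
        - (∑' t : ℕ, γ ^ t * ∑ s, ∑ a, d π₂ t s * π₂ s a * r s a))
      - (∑' t : ℕ, γ ^ t * ∑ s, d π₂ t s *
          (∑ a, (π₁ s a - π₂ s a) * (Q s a - V s)))|
      ≤ 2 * α * γ * (2 * α + 1) * ε / (1 - γ) ^ 2 := by
  have hTV : ∀ s, ∑ a, |π₁ s a - π₂ s a| ≤ 2 * α := fun s => by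
    have := hα ▸ le_sup' (fun s => (∑ a, |π₁ s a - π₂ s a|) / 2) (mem_univ s)
    linarith
  have hadv : ∀ s a, |Q s a - V s| ≤ ε := fun s a => hε ▸
    (le_sup' (fun a => |Q s a - V s|) (mem_univ a)).trans
      (le_sup' (fun s => univ.sup' univ_nonempty fun a => |Q s a - V s|) (mem_univ s))
  have hε0 : 0 ≤ ε := (abs_nonneg _).trans (hadv (Classical.arbitrary S) (Classical.arbitrary A))
  have hα0 : 0 ≤ α := by
    linarith [hTV (Classical.arbitrary S), sum_nonneg fun a (_ : a ∈ univ) =>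
      abs_nonneg (π₁ (Classical.arbitrary S) a - π₂ (Classical.arbitrary S) a)]
  calc _ ≤ 2 * α * ε * (γ / (1 - γ) ^ 2) :=
        abs_regret_sub_tsum_advantage_le hγ0 hγ1 r Q V hPtr hπ₁ hπ₂ (hdzero π₁ ▸ hd0)
          ((hdzero π₁).trans (hdzero π₂).symm) (fun t => funext (hdsucc π₁ t))
          (fun t => funext (hdsucc π₂ t)) hQ hTV hadv hε0
    _ = 2 * α * γ * 1 * ε / (1 - γ) ^ 2 := by ring
    _ ≤ 2 * α * γ * (2 * α + 1) * ε / (1 - γ) ^ 2 := by gcongr; linarith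

/-- Off-policy regret bound: for `π₂` optimal under entropy-regularized RL with reward `r`,
    `|U_r(π₁) − U_r(π₂) − Σ_t γ^t E_{s_t∼π₂}[ΔA(s_t)]| ≤ 2αγ(2α+1)ε/(1−γ)²`. -/
theorem regret_bound_off_policy {S A : Type*} [Fintype S] [Nonempty S] [Fintype A] [Nonempty A]
    (γ : ℝ) (hγ0 : 0 ≤ γ) (hγ1 : γ < 1)
    (r : S → A → ℝ) (d0 : S → ℝ) (Ptr : S → A → S → ℝ)
    (hd0 : (∀ s, 0 ≤ d0 s) ∧ ∑ s, d0 s = 1)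
    (hPtr : ∀ s a, (∀ s', 0 ≤ Ptr s a s') ∧ ∑ s', Ptr s a s' = 1)
    (π₁ π₂ : S → A → ℝ)
    (hπ₁ : ∀ s, (∀ a, 0 ≤ π₁ s a) ∧ ∑ a, π₁ s a = 1)
    (hπ₂ : ∀ s, (∀ a, 0 ≤ π₂ s a) ∧ ∑ a, π₂ s a = 1)
    (d : (S → A → ℝ) → ℕ → S → ℝ)
    (hdzero : ∀ π, d π 0 = d0)
    (hdsucc : ∀ π t s', d π (t + 1) s' = ∑ s, ∑ a, d π t s * π s a * Ptr s a s')
    (Hloc : (S → A → ℝ) → S → ℝ)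
    (hHloc : ∀ π s, Hloc π s = ∑ a, -(π s a * Real.log (π s a)))
    -- soft value functions of π₂
    (Q : S → A → ℝ) (V : S → ℝ)
    (hQ : ∀ s a, Q s a = r s a + γ * ∑ s', Ptr s a s' * V s')
    (hV : ∀ s, V s = (∑ a, π₂ s a * Q s a) + Hloc π₂ s)
    -- π₂ is optimal for entropy-regularized RL under r
    (hopt : ∀ π : S → A → ℝ, (∀ s, (∀ a, 0 ≤ π s a) ∧ ∑ a, π s a = 1) →
        (∑' t : ℕ, γ ^ t * ∑ s, ∑ a, d π t s * π s a * r s a)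
          + (∑' t : ℕ, γ ^ t * ∑ s, d π t s * Hloc π s)
        ≤ (∑' t : ℕ, γ ^ t * ∑ s, ∑ a, d π₂ t s * π₂ s a * r s a)
          + (∑' t : ℕ, γ ^ t * ∑ s, d π₂ t s * Hloc π₂ s))
    -- α : maximal total-variation distance between π₁ and π₂; ε : maximal |A_{π₂}|
    (α ε : ℝ)
    (hα : α = univ.sup' univ_nonempty (fun s => (∑ a, |π₁ s a - π₂ s a|) / 2))
    (hε : ε = univ.sup' univ_nonempty
        (fun s => univ.sup' univ_nonempty (fun a => |Q s a - V s|))) :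
    |((∑' t : ℕ, γ ^ t * ∑ s, ∑ a, d π₁ t s * π₁ s a * r s a)
        - (∑' t : ℕ, γ ^ t * ∑ s, ∑ a, d π₂ t s * π₂ s a * r s a))
      - (∑' t : ℕ, γ ^ t * ∑ s, d π₂ t s *
          (∑ a, (π₁ s a - π₂ s a) * (Q s a - V s)))|
      ≤ 2 * α * γ * (2 * α + 1) * ε / (1 - γ) ^ 2 :=
  regret_bound_off_policy_general γ hγ0 hγ1 r d0 Ptr hd0 hPtr π₁ π₂ hπ₁ hπ₂ d hdzero hdsucc Q V hQ α
    ε hα hε
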